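/- Let H, K be closed subspaces of L², let a₁, a₂ ∈ 𝒢L∞ with a₁K = H and a₂K = H, and let E = T_{ā₂}^{H,K} and F = T_{a₁}^{K,H} = M_{a₁}|_K. Then the following are equivalent: (i) E = F⁻¹; (ii) T_{ā₂ − a₁⁻¹}^{H,K} = 0; (iii) T_{ā₂⁻¹ − a₁}^{K,H} = 0; (iv) T_{1 − ā₂a₁}^K = 0; (v) T_{1 − ā₂⁻¹a₁⁻¹}^H = 0. (When these hold and φ = ā₂·ψ·a₁, the identity T_φ^K = E T_ψ^H F is a similarity between T_φ^K and T_ψ^H.) -/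

import Mathlib

open MeasureTheory

noncomputable section

/-! ## Setup: the circle, L², L∞, multiplication operators, Hardy space,
model spaces, and generalized Toeplitz operators -/

instance : Fact (0 < 2 * Real.pi) := ⟨by positivity⟩

/-- The normalized Lebesgue (Haar) measure `dθ/2π` on the circle. -/
abbrev μH : Measure (AddCircle (2 * Real.pi)) := AddCircle.haarAddCircle

/-- The Lebesgue space `L²` of the circle. -/
abbrev L2 : Type := Lp ℂ 2 μH

/-- The space `L∞` of essentially bounded functions on the circle. -/
abbrev Linf : Type := Lp ℂ ⊤ μH

/-- Pointwise (a.e.) multiplication on `L∞`. -/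
instance : Mul Linf :=
  ⟨fun f g => ((Lp.memLp g).smul (r := ⊤) (Lp.memLp f)).toLp (⇑f • ⇑g)⟩

/-- The constant function `1` as an element of `L∞`. -/
instance : One Linf := ⟨(memLp_const (1 : ℂ)).toLp (fun _ => (1 : ℂ))⟩

/-- Complex conjugation on `L∞`. -/
instance : Star Linf :=
  ⟨fun f => ((Complex.conjCLE.toContinuousLinearMap).comp_memLp' (Lp.memLp f)).toLp
    ((starRingEnd ℂ) ∘ ⇑f)⟩

/-- Multiplication of an `L²` function by an `L∞` function. -/
def mulFun (φ : Linf) (f : L2) : L2 :=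
  ((Lp.memLp f).smul (r := 2) (Lp.memLp φ)).toLp (⇑φ • ⇑f)

lemma mulFun_coe (φ : Linf) (f : L2) : mulFun φ f =ᵐ[μH] ⇑φ • ⇑f :=
  MemLp.coeFn_toLp _

lemma mulFun_norm_le (φ : Linf) (f : L2) : ‖mulFun φ f‖ ≤ ‖φ‖ * ‖f‖ := by
  rw [mulFun, Lp.norm_toLp, Lp.norm_def, Lp.norm_def, ← ENNReal.toReal_mul]
  refine ENNReal.toReal_mono ?_ ?_
  · exact ENNReal.mul_ne_top (Lp.eLpNorm_ne_top φ) (Lp.eLpNorm_ne_top f)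
  · exact eLpNorm_smul_le_eLpNorm_top_mul_eLpNorm 2 (Lp.aestronglyMeasurable f) ⇑φ

/-- The bounded multiplication operator `M_φ : L² → L²` for `φ ∈ L∞`. -/
def mulCLM (φ : Linf) : L2 →L[ℂ] L2 :=
  LinearMap.mkContinuous
    { toFun := mulFun φ
      map_add' := by
        intro f g
        apply Lp.ext
        filter_upwards [mulFun_coe φ (f + g), mulFun_coe φ f, mulFun_coe φ g,
          Lp.coeFn_add f g, Lp.coeFn_add (mulFun φ f) (mulFun φ g)] with x h1 h2 h3 h4 h5
        simp only [Pi.smul_apply', Pi.add_apply] at *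
        rw [h1, h5, h2, h3, h4]
        exact smul_add _ _ _
      map_smul' := by
        intro c f
        apply Lp.ext
        filter_upwards [mulFun_coe φ (c • f), mulFun_coe φ f,
          Lp.coeFn_smul c f, Lp.coeFn_smul c (mulFun φ f)] with x h1 h2 h3 h4
        simp only [Pi.smul_apply', Pi.smul_apply, RingHom.id_apply] at *
        rw [h1, h4, h2, h3]
        exact smul_comm _ _ _ }
    ‖φ‖ (mulFun_norm_le φ)

/-- The image `a·K = {a f : f ∈ K}` of a subspace `K ⊆ L²` under multiplication by `a ∈ L∞`. -/
def smulSub (a : Linf) (K : Submodule ℂ L2) : Submodule ℂ L2 :=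
  K.map (mulCLM a : L2 →ₗ[ℂ] L2)

/-- The Hardy space `H² = {f ∈ L² : f̂(n) = 0 for n < 0}`. -/
def Hardy : Submodule ℂ L2 where
  carrier := {f | ∀ n : ℤ, n < 0 → fourierBasis.repr f n = 0}
  add_mem' := by
    intro f g hf hg n hn
    rw [map_add, lp.coeFn_add, Pi.add_apply, hf n hn, hg n hn, add_zero]
  zero_mem' := by
    intro n hn
    rw [map_zero, lp.coeFn_zero]
    rfl
  smul_mem' := by
    intro c f hf n hn
    rw [_root_.map_smul, lp.coeFn_smul, Pi.smul_apply, hf n hn, smul_zero]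

lemma hardy_isClosed : IsClosed (Hardy : Set L2) := by
  have h : (Hardy : Set L2) =
      ⋂ n : {m : ℤ // m < 0}, {f : L2 | fourierBasis.repr f n.1 = 0} := by
    ext f
    constructor
    · intro hf
      exact Set.mem_iInter.2 fun n => hf n.1 n.2
    · intro hf n hn
      exact Set.mem_iInter.1 hf ⟨n, hn⟩
  rw [h]
  refine isClosed_iInter fun n => isClosed_eq ?_ continuous_const
  have : (fun f : L2 => fourierBasis.repr f n.1) =
      fun f : L2 => (innerSL ℂ (fourierBasis n.1)) f := by
    funext f
    exact fourierBasis.repr_apply_apply f n.1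
  rw [this]
  exact (innerSL ℂ (fourierBasis n.1)).continuous

instance : CompleteSpace Hardy := hardy_isClosed.completeSpace_coe

/-- The model space `K_θ = H² ⊖ θH² = H² ∩ (θH²)^⊥`. -/
def modelSpace (θ : Linf) : Submodule ℂ L2 :=
  Hardy ⊓ (smulSub θ Hardy)ᗮ

instance (θ : Linf) : CompleteSpace (modelSpace θ) := by
  refine IsClosed.completeSpace_coe (hs := ?_)
  have h : (modelSpace θ : Set L2) = (Hardy : Set L2) ∩ ((smulSub θ Hardy)ᗮ : Set L2) := rfl
  rw [h]
  exact hardy_isClosed.inter (smulSub θ Hardy).isClosed_orthogonal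

/-- The generalized Toeplitz operator `T_φ^{H₁,H₂} = P_{H₂} M_φ |_{H₁}`. -/
def genToeplitz (φ : Linf) (H₁ H₂ : Submodule ℂ L2) [CompleteSpace H₂] : H₁ →L[ℂ] H₂ :=
  H₂.orthogonalProjectionOnto.comp ((mulCLM φ).comp H₁.subtypeL)

/-- The orthogonal projection of `L²` onto `H`, viewed as an operator `L² → L²`. -/
def projL (H : Submodule ℂ L2) [CompleteSpace H] : L2 →L[ℂ] L2 :=
  H.subtypeL.comp H.orthogonalProjectionOnto

/-- `φ ∈ H∞`: all negative Fourier coefficients of `φ` vanish. -/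
def IsHardyInf (φ : Linf) : Prop := ∀ n : ℤ, n < 0 → fourierCoeff (⇑φ) n = 0

/-- `θ` is an inner function: `θ ∈ H∞` and `|θ| = 1` a.e. on the circle. -/
def IsInner (θ : Linf) : Prop :=
  IsHardyInf θ ∧ ∀ᵐ x ∂μH, ‖(θ : AddCircle (2 * Real.pi) → ℂ) x‖ = 1

/-- `a ∈ 𝒢H∞` with explicit inverse `b ∈ H∞`. -/
def GHinfPair (a b : Linf) : Prop := IsHardyInf a ∧ IsHardyInf b ∧ a * b = 1

/-- `a ∈ 𝒢H∞`: `a` is invertible in the algebra `H∞`. -/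
def IsGHinf (a : Linf) : Prop := ∃ b, GHinfPair a b

/-- `b ∈ 𝒢H̄∞`: `b` is the conjugate of an element of `𝒢H∞`. -/
def IsGHinfBar (b : Linf) : Prop := ∃ c, IsGHinf c ∧ b = star c

/-- `a ∈ 𝒢L∞` with explicit inverse `b`. -/
def GLinfPair (a b : Linf) : Prop := a * b = 1 ∧ b * a = 1

/-- `a ∈ 𝒢L∞`: `a` is invertible in the algebra `L∞`. -/
def IsGLinf (a : Linf) : Prop := ∃ b, GLinfPair a b

/-- The kernel of an operator between subspaces of `L²`, viewed as a subspace of `L²`. -/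
def subKer {K₁ K₂ : Submodule ℂ L2} (T : K₁ →L[ℂ] K₂) : Submodule ℂ L2 :=
  (LinearMap.ker (T : K₁ →ₗ[ℂ] K₂)).map K₁.subtype

/-- The range of an operator between subspaces of `L²`, viewed as a subspace of `L²`. -/
def subRan {K₁ K₂ : Submodule ℂ L2} (T : K₁ →L[ℂ] K₂) : Submodule ℂ L2 :=
  (LinearMap.range (T : K₁ →ₗ[ℂ] K₂)).map K₂.subtype

/-- The image of a subspace `S ⊆ K₁` under `T : K₁ → K₂`, viewed as a subspace of `L²`. -/
def opImage {K₁ K₂ : Submodule ℂ L2} (T : K₁ →L[ℂ] K₂) (S : Submodule ℂ K₁) :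
    Submodule ℂ L2 :=
  (S.map (T : K₁ →ₗ[ℂ] K₂)).map K₂.subtype

section Antilinear

variable {E : Type*} [NormedAddCommGroup E] [InnerProductSpace ℂ E]

/-- `C` is antilinear: `C(f + a g) = C f + ā C g`. -/
def IsAntilinearMap (C : E → E) : Prop :=
  ∀ (f g : E) (a : ℂ), C (f + a • g) = C f + (starRingEnd ℂ a) • C g

/-- `Cs` is the antilinear adjoint of `C`: `⟨C f, g⟩ = conj ⟨f, Cs g⟩`. -/
def IsAntilinearAdjointOf (C Cs : E → E) : Prop :=
  ∀ f g : E, (inner ℂ (C f) g : ℂ) = (starRingEnd ℂ) (inner ℂ f (Cs g) : ℂ)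

/-- `C` is an antilinear unitary: it is antilinear and its antilinear adjoint is its inverse. -/
def IsAntilinearUnitary (C : E → E) : Prop :=
  IsAntilinearMap C ∧ ∃ Cs : E → E, IsAntilinearAdjointOf C Cs ∧
    Function.LeftInverse Cs C ∧ Function.RightInverse Cs C

/-- `T` is complex selfadjoint with respect to `C` (with inverse `Cinv`): `C T C⁻¹ = T*`. -/
def IsComplexSelfadjointWith [CompleteSpace E] (T : E →L[ℂ] E) (C Cinv : E → E) : Prop :=
  ∀ f : E, C (T (Cinv f)) = ContinuousLinearMap.adjoint T f

end Antilinear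

/-! Write `A₁ = M_{a₁}`, `A₂ = M_{a₂}`, `B₁ = M_{b₁}`, `B₂ = M_{b₂}`, so that `a ↦ M_a` turns
conjugation into the adjoint and every condition is a compression `P_{H₂} T|_{H₁}` of an
operator. Each condition reduces to `P_K (1 - A₂* A₁)|_K = 0`: since `A₁` and `A₂` map `K` onto
`H`, a compression from `H` can be tested on `A₁ K` and one into `H` against `A₂ K`, which moves
`A₁` and `A₂*` inside the compression, where `B₁ A₁ = 1` and `A₂* B₂* = 1` cancel them. For (i),
`E F = P_K A₂* A₁|_K` because `A₁ K ⊆ H`, and a left inverse of the surjection `F : K → H` is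
two-sided. -/

open scoped InnerProductSpace

section Compression

variable {E : Type*} [NormedAddCommGroup E] [InnerProductSpace ℂ E]

def compression (T : E →L[ℂ] E) (H₁ H₂ : Submodule ℂ E) [H₂.HasOrthogonalProjection] :
    H₁ →L[ℂ] H₂ :=
  H₂.orthogonalProjectionOnto ∘L T ∘L H₁.subtypeL

variable {H₁ H₂ H₃ : Submodule ℂ E}

lemma compression_sub (S T : E →L[ℂ] E) [H₂.HasOrthogonalProjection] :
    compression (S - T) H₁ H₂ = compression S H₁ H₂ - compression T H₁ H₂ := by
  simp only [compression, ContinuousLinearMap.sub_comp, ContinuousLinearMap.comp_sub]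

lemma compression_neg (T : E →L[ℂ] E) [H₂.HasOrthogonalProjection] :
    compression (-T) H₁ H₂ = -compression T H₁ H₂ := by
  simp only [compression, ContinuousLinearMap.neg_comp, ContinuousLinearMap.comp_neg]

lemma compression_one (K : Submodule ℂ E) [K.HasOrthogonalProjection] :
    compression 1 K K = ContinuousLinearMap.id ℂ K :=
  ContinuousLinearMap.ext K.orthogonalProjectionOnto_mem_subspace_eq_self

lemma compression_apply_of_mem {T : E →L[ℂ] E} [H₂.HasOrthogonalProjection] {f : H₁}
    (h : T f ∈ H₂) : compression T H₁ H₂ f = ⟨T f, h⟩ :=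
  H₂.orthogonalProjectionOnto_mem_subspace_eq_self ⟨T f, h⟩

lemma compression_eq_zero_iff {T : E →L[ℂ] E} [H₂.HasOrthogonalProjection] :
    compression T H₁ H₂ = 0 ↔ ∀ f ∈ H₁, ∀ g ∈ H₂, ⟪T f, g⟫_ℂ = 0 := by
  simp only [ContinuousLinearMap.ext_iff, compression, ContinuousLinearMap.comp_apply,
    Submodule.subtypeL_apply, zero_apply,
    Submodule.orthogonalProjectionOnto_eq_zero_iff, Submodule.mem_orthogonal', Subtype.forall]

lemma compression_surjective_of_map_eq {A : E →L[ℂ] E} [H₂.HasOrthogonalProjection]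
    (hA : H₁.map (A : E →ₗ[ℂ] E) = H₂) : Function.Surjective (compression A H₁ H₂) := by
  rintro ⟨g, hg⟩
  rw [← hA] at hg
  obtain ⟨f, hf, rfl⟩ := hg
  exact ⟨⟨f, hf⟩, compression_apply_of_mem _⟩

lemma compression_mul_of_map_le {S T : E →L[ℂ] E} [H₂.HasOrthogonalProjection]
    [H₃.HasOrthogonalProjection] (hS : H₁.map (S : E →ₗ[ℂ] E) ≤ H₂) :
    compression (T * S) H₁ H₃ = compression T H₂ H₃ ∘L compression S H₁ H₂ := by
  ext1 f
  rw [ContinuousLinearMap.comp_apply, compression_apply_of_mem (hS ⟨f, f.2, rfl⟩)]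
  rfl

lemma compression_eq_zero_iff_mul_of_map_eq {A T : E →L[ℂ] E} [H₃.HasOrthogonalProjection]
    (hA : H₁.map (A : E →ₗ[ℂ] E) = H₂) :
    compression T H₂ H₃ = 0 ↔ compression (T * A) H₁ H₃ = 0 := by
  simp only [compression_eq_zero_iff, ← hA, Submodule.mem_map, forall_exists_index, and_imp,
    forall_apply_eq_imp_iff₂, ContinuousLinearMap.coe_coe, mul_apply_eq_comp]

variable [CompleteSpace E]

lemma compression_mul_of_map_star_le {S T : E →L[ℂ] E} [H₂.HasOrthogonalProjection]
    [H₃.HasOrthogonalProjection] (hT : H₃.map ((star T : E →L[ℂ] E) : E →ₗ[ℂ] E) ≤ H₂) :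
    compression (T * S) H₁ H₃ = compression T H₂ H₃ ∘L compression S H₁ H₂ := by
  ext1 f
  -- `T` maps `H₂ᗮ` into `H₃ᗮ`, so projecting `S f` onto `H₂` first does not change the result.
  have hperp : T (S f - H₂.starProjection (S f)) ∈ H₃ᗮ := by
    refine (Submodule.mem_orthogonal' _ _).2 fun g hg => ?_
    rw [← ContinuousLinearMap.adjoint_inner_right, ← ContinuousLinearMap.star_eq_adjoint]
    exact Submodule.inner_left_of_mem_orthogonal (hT ⟨g, hg, rfl⟩)
      (H₂.sub_starProjection_mem_orthogonal _)
  rw [map_sub, ← Submodule.orthogonalProjectionOnto_eq_zero_iff, map_sub, sub_eq_zero] at hperp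
  exact hperp

lemma compression_eq_zero_iff_star_mul_of_map_eq {A T : E →L[ℂ] E}
    [H₁.HasOrthogonalProjection] [H₂.HasOrthogonalProjection]
    (hA : H₁.map (A : E →ₗ[ℂ] E) = H₂) :
    compression T H₃ H₂ = 0 ↔ compression (star A * T) H₃ H₁ = 0 := by
  simp only [compression_eq_zero_iff, ← hA, Submodule.mem_map, forall_exists_index, and_imp,
    forall_apply_eq_imp_iff₂, ContinuousLinearMap.coe_coe, mul_apply_eq_comp,
    ContinuousLinearMap.star_eq_adjoint, ContinuousLinearMap.adjoint_inner_left]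

variable {H K : Submodule ℂ E} [H.HasOrthogonalProjection] [K.HasOrthogonalProjection]

theorem tfae_compression_of_map_eq {A₁ B₁ A₂ B₂ : E →L[ℂ] E} (hB₁ : B₁ * A₁ = 1)
    (hB₂ : B₂ * A₂ = 1) (hA₁ : K.map (A₁ : E →ₗ[ℂ] E) = H)
    (hA₂ : K.map (A₂ : E →ₗ[ℂ] E) = H) :
    [(compression (star A₂) H K ∘L compression A₁ K H = ContinuousLinearMap.id ℂ K ∧
        compression A₁ K H ∘L compression (star A₂) H K = ContinuousLinearMap.id ℂ H),
      compression (star A₂ - B₁) H K = 0,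
      compression (star B₂ - A₁) K H = 0,
      compression (1 - star A₂ * A₁) K K = 0,
      compression (1 - star B₂ * B₁) H H = 0].TFAE := by
  have hB₂' : star A₂ * star B₂ = 1 := by rw [← star_mul, hB₂, star_one]
  have hEF : compression (star A₂) H K ∘L compression A₁ K H =
      compression (star A₂ * A₁) K K := (compression_mul_of_map_le hA₁.le).symm
  have h4 : compression (1 - star A₂ * A₁) K K = 0 ↔
      compression (star A₂) H K ∘L compression A₁ K H = ContinuousLinearMap.id ℂ K := by
    rw [compression_sub, compression_one, sub_eq_zero, hEF, eq_comm]
  tfae_have 1 ↔ 4 := by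
    refine ⟨fun h => h4.2 h.1, fun h => ⟨h4.1 h, ?_⟩⟩
    have hleft : Function.LeftInverse (compression (star A₂) H K) (compression A₁ K H) :=
      fun f => congr($(h4.1 h) f)
    exact ContinuousLinearMap.ext (hleft.rightInverse_of_surjective
      (compression_surjective_of_map_eq hA₁))
  tfae_have 2 ↔ 4 := by
    rw [compression_eq_zero_iff_mul_of_map_eq hA₁, sub_mul, hB₁, ← neg_sub, compression_neg,
      neg_eq_zero]
  tfae_have 3 ↔ 4 := by
    rw [compression_eq_zero_iff_star_mul_of_map_eq hA₂, mul_sub, hB₂']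
  tfae_have 5 ↔ 4 := by
    have h : star A₂ * ((1 - star B₂ * B₁) * A₁) =
        star A₂ * A₁ - star A₂ * star B₂ * (B₁ * A₁) := by noncomm_ring
    rw [compression_eq_zero_iff_mul_of_map_eq hA₁,
      compression_eq_zero_iff_star_mul_of_map_eq hA₂, h, hB₂', hB₁, one_mul, ← neg_sub,
      compression_neg, neg_eq_zero]
  tfae_finish

lemma compression_star_mul_mul {A₁ A₂ : E →L[ℂ] E} (S : E →L[ℂ] E)
    (hA₁ : K.map (A₁ : E →ₗ[ℂ] E) ≤ H) (hA₂ : K.map (A₂ : E →ₗ[ℂ] E) ≤ H) :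
    compression (star A₂ * S * A₁) K K =
      compression (star A₂) H K ∘L compression S H H ∘L compression A₁ K H := by
  rw [compression_mul_of_map_le hA₁,
    compression_mul_of_map_star_le (H₂ := H) (by rwa [star_star]), ContinuousLinearMap.comp_assoc]

end Compression

section MultiplicationOperators

namespace Linf

lemma coeFn_mul (a b : Linf) : ⇑(a * b) =ᵐ[μH] fun x => a x * b x :=
  MemLp.coeFn_toLp _

lemma coeFn_one : ⇑(1 : Linf) =ᵐ[μH] fun _ => (1 : ℂ) :=
  MemLp.coeFn_toLp _

lemma coeFn_star (a : Linf) : ⇑(star a) =ᵐ[μH] fun x => starRingEnd ℂ (a x) :=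
  MemLp.coeFn_toLp _

end Linf

lemma coeFn_mulCLM (a : Linf) (f : L2) : mulCLM a f =ᵐ[μH] fun x => a x * f x :=
  mulFun_coe a f

lemma mulCLM_mul (a b : Linf) : mulCLM (a * b) = mulCLM a * mulCLM b := by
  ext1 f
  apply Lp.ext
  filter_upwards [coeFn_mulCLM (a * b) f, coeFn_mulCLM a (mulCLM b f), coeFn_mulCLM b f,
    Linf.coeFn_mul a b] with x hab ha hb hmul
  rw [mul_apply_eq_comp, hab, ha, hb, hmul, mul_assoc]

lemma mulCLM_one : mulCLM 1 = 1 := by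
  ext1 f
  apply Lp.ext
  filter_upwards [coeFn_mulCLM 1 f, Linf.coeFn_one] with x h h1
  rw [h, h1, one_mul, one_apply_eq_self]

lemma mulCLM_sub (a b : Linf) : mulCLM (a - b) = mulCLM a - mulCLM b := by
  ext1 f
  apply Lp.ext
  filter_upwards [coeFn_mulCLM (a - b) f, Lp.coeFn_sub a b,
    Lp.coeFn_sub (mulCLM a f) (mulCLM b f), coeFn_mulCLM a f, coeFn_mulCLM b f]
    with x h hsub hsub' ha hb
  rw [sub_apply, h, hsub', Pi.sub_apply, ha, hb, hsub, Pi.sub_apply, sub_mul]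

lemma mulCLM_star (a : Linf) : mulCLM (star a) = star (mulCLM a) := by
  rw [ContinuousLinearMap.star_eq_adjoint, ContinuousLinearMap.eq_adjoint_iff]
  intro f g
  rw [L2.inner_def, L2.inner_def]
  refine integral_congr_ae ?_
  filter_upwards [coeFn_mulCLM (star a) f, coeFn_mulCLM a g, Linf.coeFn_star a] with x hf hg ha
  simp only [hf, hg, ha, RCLike.inner_apply, map_mul, Complex.conj_conj]
  ring

lemma genToeplitz_eq_compression (φ : Linf) (H₁ H₂ : Submodule ℂ L2) [CompleteSpace H₂] :
    genToeplitz φ H₁ H₂ = compression (mulCLM φ) H₁ H₂ :=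
  rfl

end MultiplicationOperators

/-- Proposition 2.16: with `E = T_{ā₂}^{H,K}` and
`F = T_{a₁}^{K,H}`, TFAE: (i) `E = F⁻¹`; (ii) `T_{ā₂ − a₁⁻¹}^{H,K} = 0`;
(iii) `T_{ā₂⁻¹ − a₁}^{K,H} = 0`; (iv) `T_{1 − ā₂a₁}^K = 0`;
(v) `T_{1 − ā₂⁻¹a₁⁻¹}^H = 0`.  When these hold and `φ = ā₂ ψ a₁`, the identity
`T_φ^K = E T_ψ^H F` is a similarity. -/
theorem statement8 (H K : Submodule ℂ L2) [CompleteSpace H] [CompleteSpace K]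
    (a₁ b₁ a₂ b₂ : Linf) (h₁ : GLinfPair a₁ b₁) (h₂ : GLinfPair a₂ b₂)
    (ha₁ : smulSub a₁ K = H) (ha₂ : smulSub a₂ K = H) :
    [((genToeplitz (star a₂) H K).comp (genToeplitz a₁ K H) =
          ContinuousLinearMap.id ℂ K ∧
        (genToeplitz a₁ K H).comp (genToeplitz (star a₂) H K) =
          ContinuousLinearMap.id ℂ H),
      genToeplitz (star a₂ - b₁) H K = 0,
      genToeplitz (star b₂ - a₁) K H = 0,
      genToeplitz (1 - star a₂ * a₁) K K = 0,
      genToeplitz (1 - star b₂ * b₁) H H = 0].TFAE ∧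
    (∀ φ ψ : Linf, φ = star a₂ * ψ * a₁ →
      (genToeplitz (star a₂) H K).comp (genToeplitz a₁ K H) =
        ContinuousLinearMap.id ℂ K →
      (genToeplitz a₁ K H).comp (genToeplitz (star a₂) H K) =
        ContinuousLinearMap.id ℂ H →
      genToeplitz φ K K = (genToeplitz (star a₂) H K).comp
        ((genToeplitz ψ H H).comp (genToeplitz a₁ K H))) := by
  have hB₁ : mulCLM b₁ * mulCLM a₁ = 1 := by rw [← mulCLM_mul, h₁.2, mulCLM_one]
  have hB₂ : mulCLM b₂ * mulCLM a₂ = 1 := by rw [← mulCLM_mul, h₂.2, mulCLM_one]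
  simp only [genToeplitz_eq_compression, mulCLM_sub, mulCLM_mul, mulCLM_one, mulCLM_star]
  refine ⟨tfae_compression_of_map_eq hB₁ hB₂ ha₁ ha₂, ?_⟩
  rintro φ ψ rfl - -
  rw [mulCLM_mul, mulCLM_mul, mulCLM_star]
  exact compression_star_mul_mul _ ha₁.le ha₂.le
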